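/- Let τ ∈ (0,1) and let (X,Y) be a bivariate normal random vector with mean zero, var(X) = var(Y) = 1, and cov(X,Y) = 1/2. Then the quantile correlation equals qcor_τ{Y,X} = 0.5·exp{−0.5·[Φ⁻¹(τ)]²} / √((τ−τ²)·2π), where Φ is the standard normal cumulative distribution function. -/

import Mathlib

open MeasureTheory ProbabilityTheory

/-- `ψ_τ(w) = τ - I(w<0)`. -/
noncomputable def psi (τ w : ℝ) : ℝ := τ - if w < 0 then 1 else 0

/-- The `τ`-th quantile of a real random variable `Y` under `P`. -/
noncomputable def quant {Ω : Type*} [MeasurableSpace Ω] (P : Measure Ω) (Y : Ω → ℝ)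
    (τ : ℝ) : ℝ := sInf {y : ℝ | τ ≤ (P {ω | Y ω ≤ y}).toReal}

/-- The quantile covariance `qcov_τ{Y,X} = E[ψ_τ(Y − Q_{τ,Y})(X − EX)]`. -/
noncomputable def qcov {Ω : Type*} [MeasurableSpace Ω] (P : Measure Ω) (Y X : Ω → ℝ)
    (τ : ℝ) : ℝ := ∫ ω, psi τ (Y ω - quant P Y τ) * (X ω - ∫ ω', X ω' ∂P) ∂P

/-- The quantile correlation `qcor_τ{Y,X} = qcov_τ{Y,X} / √((τ−τ²) var X)`. -/
noncomputable def qcor {Ω : Type*} [MeasurableSpace Ω] (P : Measure Ω) (Y X : Ω → ℝ)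
    (τ : ℝ) : ℝ := qcov P Y X τ / Real.sqrt ((τ - τ ^ 2) * variance X P)

/-- The standard normal cumulative distribution function `Φ`. -/
noncomputable def stdNormalCDF (x : ℝ) : ℝ := ((gaussianReal 0 1) (Set.Iic x)).toReal

/-- The standard normal quantile function `Φ⁻¹`. -/
noncomputable def stdNormalQuantile (τ : ℝ) : ℝ := sInf {x : ℝ | τ ≤ stdNormalCDF x}

/-! The quantile correlation only depends on the joint law of `(X, Y)`, so it may be computed on
`ℝ × ℝ` under a product of two standard Gaussians, with `X = U` and `Y = aU + bV`, `a² + b² = 1`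
(here `a = 1/2`). Then `Y` is standard normal, so `Q_{τ,Y} = Φ⁻¹(τ) =: q`, and as `EX = 0`,
`qcov_τ{Y,X} = -E[U; aU + bV < q]`. Integrating first in `U` gives `E[U; U < c] = -φ(c)`, and
completing the square, `φ(v) φ((q - bv)/a) = φ(q) φ((v - bq)/a)`, so the remaining integral in
`V` equals `-a φ(q)`. -/

open Real Set

lemma gaussianPDFReal_zero_one (x : ℝ) :
    gaussianPDFReal 0 1 x = (√(2 * π))⁻¹ * exp (-x ^ 2 / 2) := by
  simp [gaussianPDFReal]

lemma hasDerivAt_gaussianPDFReal_zero_one (x : ℝ) :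
    HasDerivAt (gaussianPDFReal 0 1) (-(x * gaussianPDFReal 0 1 x)) x := by
  have h : HasDerivAt (fun y : ℝ => -y ^ 2 / 2) (-x) x :=
    (((hasDerivAt_pow 2 x).neg).div_const 2).congr_deriv (by ring)
  rw [funext gaussianPDFReal_zero_one]
  exact ((h.exp).const_mul (√(2 * π))⁻¹).congr_deriv (by ring)

lemma integrable_mul_gaussianPDFReal_zero_one :
    Integrable (fun x => x * gaussianPDFReal 0 1 x) := by
  have h := (integrable_mul_exp_neg_mul_sq (b := 1 / 2) (by norm_num)).const_mul (√(2 * π))⁻¹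
  refine h.congr (ae_of_all _ fun x => ?_)
  simp only [gaussianPDFReal_zero_one]; ring_nf

lemma setIntegral_Iic_mul_gaussianPDFReal_zero_one (a : ℝ) :
    ∫ x in Iic a, x * gaussianPDFReal 0 1 x = -gaussianPDFReal 0 1 a := by
  have hderiv : ∀ x ∈ Iic a, HasDerivAt (fun y => -gaussianPDFReal 0 1 y)
      (x * gaussianPDFReal 0 1 x) x := fun x _ =>
    (hasDerivAt_gaussianPDFReal_zero_one x).neg.congr_deriv (neg_neg _)
  have hlim := tendsto_zero_of_hasDerivAt_of_integrableOn_Iic hderiv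
    integrable_mul_gaussianPDFReal_zero_one.integrableOn
    (integrable_gaussianPDFReal 0 1).neg.integrableOn
  simpa using integral_Iic_of_hasDerivAt_of_tendsto' hderiv
    integrable_mul_gaussianPDFReal_zero_one.integrableOn hlim

lemma setIntegral_Iio_id_gaussianReal (c : ℝ) :
    ∫ x in Iio c, x ∂(gaussianReal 0 1) = -gaussianPDFReal 0 1 c := by
  have := nullSingletonClass_gaussianReal (μ := 0) one_ne_zero
  rw [Measure.restrict_congr_set Iio_ae_eq_Iic, ← integral_indicator measurableSet_Iic,
    integral_gaussianReal_eq_integral_smul one_ne_zero,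
    ← setIntegral_Iic_mul_gaussianPDFReal_zero_one, ← integral_indicator measurableSet_Iic]
  congr 1 with x
  by_cases hx : x ∈ Iic c <;> simp [hx, mul_comm]

lemma gaussianPDFReal_zero_one_mul_div_comm {a b : ℝ} (ha : a ≠ 0) (hab : a ^ 2 + b ^ 2 = 1)
    (x y : ℝ) :
    gaussianPDFReal 0 1 x * gaussianPDFReal 0 1 ((y - b * x) / a)
      = gaussianPDFReal 0 1 y * gaussianPDFReal 0 1 ((x - b * y) / a) := by
  simp only [gaussianPDFReal_zero_one, mul_mul_mul_comm _ (exp _), ← exp_add]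
  congr 2
  field_simp
  linear_combination (y ^ 2 - x ^ 2) * hab

lemma integral_gaussianPDFReal_zero_one_sub_div (c a : ℝ) :
    ∫ x, gaussianPDFReal 0 1 ((x - c) / a) = |a| := by
  rw [integral_sub_right_eq_self (fun x => gaussianPDFReal 0 1 (x / a)) c,
    Measure.integral_comp_div, integral_gaussianPDFReal_eq_one 0 one_ne_zero, smul_eq_mul, mul_one]

lemma integrable_fst_gaussianReal_prod :
    Integrable Prod.fst ((gaussianReal 0 1).prod (gaussianReal 0 1)) :=
  ((memLp_id_gaussianReal 1).integrable le_rfl).comp_fst _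

lemma integrable_ite_lt_fst_gaussianReal_prod (a b q : ℝ) :
    Integrable (fun p : ℝ × ℝ => if a * p.1 + b * p.2 < q then p.1 else 0)
      ((gaussianReal 0 1).prod (gaussianReal 0 1)) :=
  integrable_fst_gaussianReal_prod.indicator
    (measurableSet_lt (f := fun p : ℝ × ℝ => a * p.1 + b * p.2) (by fun_prop) measurable_const)

lemma integral_ite_lt_fst_gaussianReal_prod {a b : ℝ} (ha : 0 < a) (hab : a ^ 2 + b ^ 2 = 1)
    (q : ℝ) :
    ∫ p, (if a * p.1 + b * p.2 < q then p.1 else 0)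
        ∂((gaussianReal 0 1).prod (gaussianReal 0 1)) = -(a * gaussianPDFReal 0 1 q) := by
  have hinner : ∀ v, ∫ u, (if a * u + b * v < q then u else 0) ∂(gaussianReal 0 1)
      = -gaussianPDFReal 0 1 ((q - b * v) / a) := by
    intro v
    rw [← setIntegral_Iio_id_gaussianReal, ← integral_indicator measurableSet_Iio]
    congr 1 with u
    have : a * u + b * v < q ↔ u < (q - b * v) / a := by
      rw [lt_div_iff₀ ha]; constructor <;> intro h <;> linarith
    simp only [indicator, mem_Iio, this]
  rw [integral_prod_symm _ (integrable_ite_lt_fst_gaussianReal_prod a b q)]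
  simp only [hinner]
  rw [integral_neg, integral_gaussianReal_eq_integral_smul one_ne_zero]
  simp only [smul_eq_mul, gaussianPDFReal_zero_one_mul_div_comm ha.ne' hab _ q]
  rw [integral_const_mul, integral_gaussianPDFReal_zero_one_sub_div, abs_of_pos ha, mul_comm]

lemma map_gaussianReal_prod_linear {a b : ℝ} (hab : a ^ 2 + b ^ 2 = 1) :
    ((gaussianReal 0 1).prod (gaussianReal 0 1)).map (fun p => a * p.1 + b * p.2)
      = gaussianReal 0 1 := by
  have : (fun p : ℝ × ℝ => a * p.1 + b * p.2)
      = (fun p : ℝ × ℝ => p.1 + p.2) ∘ Prod.map (a * ·) (b * ·) := rfl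
  rw [this, ← Measure.map_map (by fun_prop) (by fun_prop),
    ← Measure.map_prod_map _ _ (by fun_prop) (by fun_prop), ← Measure.conv,
    gaussianReal_map_const_mul, gaussianReal_map_const_mul, gaussianReal_conv_gaussianReal]
  congr 1
  · ring
  · ext; simp [hab]

@[fun_prop]
lemma measurable_psi (τ : ℝ) : Measurable (psi τ) :=
  measurable_const.sub (Measurable.ite measurableSet_Iio measurable_const measurable_const)

namespace ProbabilityTheory.IdentDistrib

variable {Ω Ω' : Type*} [MeasurableSpace Ω] [MeasurableSpace Ω'] {P : Measure Ω}
  {P' : Measure Ω'}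

lemma quant_eq {Y : Ω → ℝ} {Y' : Ω' → ℝ} (h : IdentDistrib Y Y' P P') (τ : ℝ) :
    quant P Y τ = quant P' Y' τ := by
  unfold quant
  congr 1 with y
  change τ ≤ (P (Y ⁻¹' Iic y)).toReal ↔ τ ≤ (P' (Y' ⁻¹' Iic y)).toReal
  rw [h.measure_mem_eq measurableSet_Iic]

lemma qcor_eq {X Y : Ω → ℝ} {X' Y' : Ω' → ℝ}
    (h : IdentDistrib (fun ω => (X ω, Y ω)) (fun ω => (X' ω, Y' ω)) P P') (τ : ℝ) :
    qcor P Y X τ = qcor P' Y' X' τ := by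
  have hX : IdentDistrib X X' P P' := h.comp measurable_fst
  have hY : IdentDistrib Y Y' P P' := h.comp measurable_snd
  unfold qcor qcov
  rw [hY.quant_eq, hX.integral_eq, hX.variance_eq]
  congr 1
  exact (h.comp (u := fun p : ℝ × ℝ => psi τ (p.2 - quant P' Y' τ) * (p.1 - ∫ ω, X' ω ∂P'))
    (by fun_prop)).integral_eq

end ProbabilityTheory.IdentDistrib

lemma qcor_gaussianReal_prod {a b : ℝ} (ha : 0 < a) (hab : a ^ 2 + b ^ 2 = 1) (τ : ℝ) :
    qcor ((gaussianReal 0 1).prod (gaussianReal 0 1)) (fun p => a * p.1 + b * p.2) Prod.fst τ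
      = a * gaussianPDFReal 0 1 (stdNormalQuantile τ) / √(τ - τ ^ 2) := by
  set μ := (gaussianReal 0 1).prod (gaussianReal 0 1)
  have hY : IdentDistrib (fun p : ℝ × ℝ => a * p.1 + b * p.2) id μ (gaussianReal 0 1) :=
    ⟨by fun_prop, aemeasurable_id, by rw [map_gaussianReal_prod_linear hab, Measure.map_id]⟩
  have hX : IdentDistrib Prod.fst id μ (gaussianReal 0 1) :=
    ⟨by fun_prop, aemeasurable_id, by simp [μ]⟩
  have hquant : quant μ (fun p => a * p.1 + b * p.2) τ = stdNormalQuantile τ :=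
    hY.quant_eq τ
  have hmean : ∫ p, p.1 ∂μ = 0 := by simpa using hX.integral_eq
  have hvar : variance Prod.fst μ = 1 := by simpa using hX.variance_eq
  have hqcov : qcov μ (fun p => a * p.1 + b * p.2) Prod.fst τ
      = a * gaussianPDFReal 0 1 (stdNormalQuantile τ) := by
    have hpsi : ∀ p : ℝ × ℝ, psi τ (a * p.1 + b * p.2 - stdNormalQuantile τ) * (p.1 - 0)
        = τ * p.1 - if a * p.1 + b * p.2 < stdNormalQuantile τ then p.1 else 0 := by
      intro p
      simp only [psi, sub_neg]
      split_ifs <;> ring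
    rw [qcov, hquant, hmean, integral_congr_ae (ae_of_all _ hpsi),
      integral_sub (integrable_fst_gaussianReal_prod.const_mul τ)
        (integrable_ite_lt_fst_gaussianReal_prod a b _),
      integral_const_mul, hmean, integral_ite_lt_fst_gaussianReal_prod ha hab]
    ring
  rw [qcor, hqcov, hvar, mul_one]

theorem stmt18_general {Ω : Type*} [MeasurableSpace Ω] (P : Measure Ω)
    (τ : ℝ)
    (X Y : Ω → ℝ)
    (hlaw : Measure.map (fun ω => (X ω, Y ω)) P =
      Measure.map (fun uv : ℝ × ℝ => (uv.1, uv.1 / 2 + (Real.sqrt 3 / 2) * uv.2))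
        ((gaussianReal 0 1).prod (gaussianReal 0 1))) :
    qcor P Y X τ =
      0.5 * Real.exp (-0.5 * stdNormalQuantile τ ^ 2) /
        Real.sqrt ((τ - τ ^ 2) * (2 * Real.pi)) := by
  have hmeas : AEMeasurable (fun ω => (X ω, Y ω)) P := AEMeasurable.of_map_ne_zero <| by
    rw [hlaw]
    exact (Measure.isProbabilityMeasure_map (by fun_prop)).ne_zero
  have hident : IdentDistrib (fun ω => (X ω, Y ω))
      (fun p : ℝ × ℝ => (p.1, 2⁻¹ * p.1 + √3 / 2 * p.2))
      P ((gaussianReal 0 1).prod (gaussianReal 0 1)) := by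
    refine ⟨hmeas, by fun_prop, ?_⟩
    rw [hlaw]
    congr with p
    · rfl
    · ring
  have hcoeff : (2⁻¹ : ℝ) ^ 2 + (√3 / 2) ^ 2 = 1 := by
    rw [div_pow, sq_sqrt zero_le_three]; norm_num
  rw [hident.qcor_eq, qcor_gaussianReal_prod (by norm_num) hcoeff, gaussianPDFReal_zero_one,
    sqrt_mul' (τ - τ ^ 2) (by positivity : (0 : ℝ) ≤ 2 * π)]
  ring_nf

/-- For `(X,Y)` a centered bivariate normal vector with unit variances and covariance
`1/2` (encoded via its Gaussian representation `X = U`, `Y = U/2 + (√3/2) V` with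
`U, V` independent standard normals),
`qcor_τ{Y,X} = 0.5 exp(−0.5 (Φ⁻¹(τ))²) / √((τ−τ²) 2π)`. -/
theorem stmt18 {Ω : Type*} [MeasurableSpace Ω] (P : Measure Ω) [IsProbabilityMeasure P]
    (τ : ℝ) (hτ : τ ∈ Set.Ioo (0 : ℝ) 1)
    (X Y : Ω → ℝ) (hX : Measurable X) (hY : Measurable Y)
    (hlaw : Measure.map (fun ω => (X ω, Y ω)) P =
      Measure.map (fun uv : ℝ × ℝ => (uv.1, uv.1 / 2 + (Real.sqrt 3 / 2) * uv.2))
        ((gaussianReal 0 1).prod (gaussianReal 0 1))) :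
    qcor P Y X τ =
      0.5 * Real.exp (-0.5 * stdNormalQuantile τ ^ 2) /
        Real.sqrt ((τ - τ ^ 2) * (2 * Real.pi)) :=
  stmt18_general P τ X Y hlaw
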